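/- arXiv:1111.6785 — 2 statements merged into one kernel-verified Lean document; each statement's English description precedes it below -/
import Mathlib

section
/- For every positive integer n, the sum over all subsets I of {1,...,n-1} of (n!)²/n_I equals n!·b_n, where b_n is the ordered Bell number and n_I = n_1!⋯n_k! with n_i − 1 the lengths of the maximal runs of consecutive integers in I. -/
/-- The ordered Bell number: the number of ordered set partitions of an `n`-element set,
counted as the number of surjections from an `n`-set onto some `Fin k` (the blocks being
the fibers, in order). -/
def orderedBell (n : ℕ) : ℕ :=
  ∑ k ∈ Finset.range (n + 1), Fintype.card {f : Fin n → Fin k // Function.Surjective f}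

/-- For `i ∈ I`, the position of `i` within its maximal run of consecutive integers in `I`:
the number of `j` with `1 ≤ j ≤ i` such that the whole interval `[j, i]` lies in `I`. -/
def runPos (I : Finset ℕ) (i : ℕ) : ℕ :=
  ((Finset.Icc 1 i).filter fun j => Finset.Icc j i ⊆ I).card

/-- `n_I = n₁! ⋯ n_k!` where `nᵢ - 1` are the lengths of the maximal runs of consecutive
integers in `I`: for a run `{a, a+1, …, a+ℓ-1}` of length `ℓ` we have
`∏_{i in run} (runPos I i + 1) = 2·3⋯(ℓ+1) = (ℓ+1)!`. -/
def nI (I : Finset ℕ) : ℕ :=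
  ∏ i ∈ I, (runPos I i + 1)

open Finset Function

/-! ### Auxiliary: surjection counts -/

/-- Number of surjections from `Fin m` onto `Fin k`. -/
def surjCard (m k : ℕ) : ℕ := Fintype.card {f : Fin m → Fin k // Surjective f}

lemma orderedBell_eq_sum (n : ℕ) :
    orderedBell n = ∑ k ∈ Finset.range (n + 1), surjCard n k := rfl

lemma surjCard_eq_zero {m k : ℕ} (h : m < k) : surjCard m k = 0 := by
  rw [surjCard, Fintype.card_eq_zero_iff]
  constructor
  rintro ⟨f, hf⟩
  have := Fintype.card_le_of_surjective f hf
  simp only [Fintype.card_fin] at this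
  omega

lemma surjCard_congr {α : Type} [Fintype α] [DecidableEq α] {m : ℕ} (k : ℕ) (e : α ≃ Fin m) :
    Fintype.card {f : α → Fin k // Surjective f} = surjCard m k := by
  apply Fintype.card_congr
  refine Equiv.subtypeEquiv (Equiv.arrowCongr e (Equiv.refl _)) fun f => ?_
  show Surjective f ↔ Surjective (⇑(Equiv.refl (Fin k)) ∘ f ∘ ⇑e.symm)
  rw [Equiv.coe_refl, Function.id_comp]
  constructor
  · intro hf
    exact hf.comp e.symm.surjective
  · intro hf
    have hfe : f = (f ∘ ⇑e.symm) ∘ ⇑e := by funext x; simp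
    rw [hfe]
    exact hf.comp e.surjective

/-- The fibers of the "fiber of the last element" map. -/
def lastFiberEquiv (n k : ℕ) (s : Finset (Fin n)) (hs : s.Nonempty) :
    {f : Fin n → Fin (k + 1) // Surjective f ∧ ∀ x, f x = Fin.last k ↔ x ∈ s}
      ≃ {g : (↥(sᶜ : Finset (Fin n))) → Fin k // Surjective g} where
  toFun f := ⟨fun x => (f.1 x).castPred (by
      have hx : (x : Fin n) ∉ s := Finset.mem_compl.1 x.2
      intro h
      exact hx ((f.2.2 x).1 h)), by
    intro y
    obtain ⟨x, hx⟩ := f.2.1 y.castSucc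
    have hxs : x ∉ s := by
      rw [← f.2.2 x, hx]
      exact Fin.ne_last_of_lt (Fin.castSucc_lt_last y)
    refine ⟨⟨x, Finset.mem_compl.2 hxs⟩, ?_⟩
    apply Fin.castSucc_injective
    rw [Fin.castSucc_castPred, hx]⟩
  invFun g := ⟨fun x => if h : x ∈ s then Fin.last k
      else (g.1 ⟨x, Finset.mem_compl.2 h⟩).castSucc, by
    constructor
    · intro y
      by_cases hy : y = Fin.last k
      · obtain ⟨x, hx⟩ := hs
        exact ⟨x, by simp [hx, hy]⟩
      · obtain ⟨x, hx⟩ := g.2 (y.castPred hy)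
        have hxs : (x : Fin n) ∉ s := Finset.mem_compl.1 x.2
        refine ⟨x, ?_⟩
        simp only [dif_neg hxs]
        have hgx : g.1 ⟨(x : Fin n), Finset.mem_compl.2 hxs⟩ = g.1 x := rfl
        rw [hgx, hx, Fin.castSucc_castPred]
    · intro x
      by_cases h : x ∈ s
      · simp [h]
      · simp only [dif_neg h, iff_false, h]
        exact Fin.ne_last_of_lt (Fin.castSucc_lt_last _)⟩
  left_inv f := by
    apply Subtype.ext
    funext x
    by_cases h : x ∈ s
    · simp only [dif_pos h]
      exact ((f.2.2 x).2 h).symm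
    · simp only [dif_neg h]
      exact Fin.castSucc_castPred _ _
  right_inv g := by
    apply Subtype.ext
    funext x
    have hx : (x : Fin n) ∉ s := Finset.mem_compl.1 x.2
    apply Fin.castSucc_injective
    rw [Fin.castSucc_castPred]
    simp only [dif_neg hx]

lemma surjCard_succ (n k : ℕ) :
    surjCard n (k + 1) = ∑ j ∈ Finset.Icc 1 n, n.choose j * surjCard (n - j) k := by
  classical
  rw [surjCard, Fintype.card_subtype]
  rw [Finset.card_eq_sum_card_fiberwise
    (f := fun f => Finset.univ.filter fun x => f x = Fin.last k)
    (t := Finset.univ.powerset) (fun f _ => mem_powerset.2 (subset_univ _))]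
  have key : ∀ s ∈ (Finset.univ : Finset (Fin n)).powerset,
      ((Finset.univ.filter fun f : Fin n → Fin (k+1) => Surjective f).filter
          fun f => Finset.univ.filter (fun x => f x = Fin.last k) = s).card
        = if s.Nonempty then surjCard (n - s.card) k else 0 := by
    intro s _
    rw [Finset.filter_filter, ← Fintype.card_subtype]
    have hiff : ∀ f : Fin n → Fin (k+1),
        (Surjective f ∧ Finset.univ.filter (fun x => f x = Fin.last k) = s)
          ↔ (Surjective f ∧ ∀ x, f x = Fin.last k ↔ x ∈ s) := by
      intro f
      constructor
      · rintro ⟨h1, h2⟩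
        refine ⟨h1, fun x => ?_⟩
        rw [← h2]
        simp
      · rintro ⟨h1, h2⟩
        refine ⟨h1, ?_⟩
        ext x
        simp [h2 x]
    rw [Fintype.card_congr (Equiv.subtypeEquiv
      (q := fun f : Fin n → Fin (k+1) => Surjective f ∧ ∀ x, f x = Fin.last k ↔ x ∈ s)
      (Equiv.refl _) (hiff))]
    by_cases hs : s.Nonempty
    · rw [if_pos hs, Fintype.card_congr (lastFiberEquiv n k s hs)]
      have : (sᶜ : Finset (Fin n)).card = n - s.card := by
        rw [Finset.card_compl, Fintype.card_fin]
      rw [surjCard_congr k (this ▸ (sᶜ : Finset (Fin n)).equivFin)]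
    · rw [if_neg hs, Fintype.card_eq_zero_iff]
      constructor
      rintro ⟨f, hf1, hf2⟩
      obtain ⟨x, hx⟩ := hf1 (Fin.last k)
      exact hs ⟨x, (hf2 x).1 hx⟩
  rw [Finset.sum_congr rfl key, Finset.sum_powerset]
  have hcard : (Finset.univ : Finset (Fin n)).card = n := by simp
  rw [hcard]
  have inner : ∀ j ∈ Finset.range (n + 1),
      (∑ s ∈ Finset.powersetCard j (Finset.univ : Finset (Fin n)),
        if s.Nonempty then surjCard (n - s.card) k else 0)
        = if 1 ≤ j then n.choose j * surjCard (n - j) k else 0 := by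
    intro j _
    have h1 : ∀ s ∈ Finset.powersetCard j (Finset.univ : Finset (Fin n)),
        (if s.Nonempty then surjCard (n - s.card) k else 0)
          = if 1 ≤ j then surjCard (n - j) k else 0 := by
      intro s hs
      rw [Finset.mem_powersetCard] at hs
      by_cases h0 : 1 ≤ j
      · rw [if_pos (Finset.card_pos.1 (by omega)), if_pos h0, hs.2]
      · have hse : s = ∅ := Finset.card_eq_zero.1 (by omega)
        rw [if_neg (by simp [hse]), if_neg h0]
    rw [Finset.sum_congr rfl h1, Finset.sum_const, Finset.card_powersetCard, hcard, smul_eq_mul]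
    by_cases hj : 1 ≤ j
    · rw [if_pos hj, if_pos hj]
    · rw [if_neg hj, if_neg hj, mul_zero]
  rw [Finset.sum_congr rfl inner, ← Finset.sum_filter]
  congr 1
  ext j
  simp [Finset.mem_Icc, Finset.mem_filter]
  omega

lemma orderedBell_zero : orderedBell 0 = 1 := by
  rw [orderedBell_eq_sum, show (0:ℕ) + 1 = 1 from rfl, Finset.range_one,
    Finset.sum_singleton, surjCard]
  rw [Fintype.card_eq_one_iff]
  refine ⟨⟨fun _ => Fin.elim0 (by assumption), fun b => b.elim0⟩, ?_⟩
  rintro ⟨f, hf⟩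
  apply Subtype.ext
  funext x
  exact x.elim0

lemma orderedBell_rec (n : ℕ) (hn : 1 ≤ n) :
    orderedBell n = ∑ j ∈ Finset.Icc 1 n, n.choose j * orderedBell (n - j) := by
  rw [orderedBell_eq_sum, Finset.sum_range_succ']
  have h0 : surjCard n 0 = 0 := by
    rw [surjCard, Fintype.card_eq_zero_iff]
    constructor
    rintro ⟨f, -⟩
    exact (f ⟨0, hn⟩).elim0
  rw [h0, add_zero]
  calc ∑ k ∈ Finset.range n, surjCard n (k + 1)
      = ∑ k ∈ Finset.range n, ∑ j ∈ Finset.Icc 1 n, n.choose j * surjCard (n - j) k :=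
        Finset.sum_congr rfl fun k _ => surjCard_succ n k
    _ = ∑ j ∈ Finset.Icc 1 n, ∑ k ∈ Finset.range n, n.choose j * surjCard (n - j) k :=
        Finset.sum_comm
    _ = ∑ j ∈ Finset.Icc 1 n, n.choose j * orderedBell (n - j) := by
        refine Finset.sum_congr rfl fun j hj => ?_
        rw [← Finset.mul_sum]
        congr 1
        rw [Finset.mem_Icc] at hj
        rw [orderedBell_eq_sum]
        refine (Finset.sum_subset ?_ ?_).symm
        · intro k hk
          simp only [Finset.mem_range] at *
          omega
        · intro k hk hk2
          simp only [Finset.mem_range] at hk hk2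
          exact surjCard_eq_zero (by omega)

/-! ### Auxiliary: the subset side -/

lemma prod_Icc_add_one (m : ℕ) : ∏ i ∈ Finset.Icc 1 m, (i + 1) = (m + 1).factorial := by
  induction m with
  | zero => simp
  | succ m ih =>
    rw [Finset.prod_Icc_succ_top (by omega), ih,
      show (m + 1 + 1).factorial = (m + 1 + 1) * (m + 1).factorial from Nat.factorial_succ _]
    ring

lemma nI_pos (I : Finset ℕ) : 0 < nI I :=
  Finset.prod_pos fun _ _ => Nat.succ_pos _

lemma runPos_low {I : Finset ℕ} {j i : ℕ} (hrun : Finset.Icc 1 (j - 1) ⊆ I)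
    (hi1 : 1 ≤ i) (hij : i ≤ j - 1) : runPos I i = i := by
  rw [runPos, Finset.filter_true_of_mem, Nat.card_Icc]
  · omega
  · intro a ha
    rw [Finset.mem_Icc] at ha
    exact (Finset.Icc_subset_Icc (by omega) (by omega)).trans hrun

lemma mem_shift {J : Finset ℕ} (hJ : ∀ x ∈ J, 1 ≤ x) {j : ℕ} (hj : 1 ≤ j) (b : ℕ) (hb : 1 ≤ b) :
    b + j ∈ Finset.Icc 1 (j - 1) ∪ J.image (· + j) ↔ b ∈ J := by
  simp only [Finset.mem_union, Finset.mem_Icc, Finset.mem_image]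
  constructor
  · rintro (h | ⟨x, hx, hxe⟩)
    · omega
    · have : x = b := by omega
      subst this; exact hx
  · intro h
    exact Or.inr ⟨b, h, rfl⟩

lemma notMem_shift {J : Finset ℕ} (hJ : ∀ x ∈ J, 1 ≤ x) {j : ℕ} (hj : 1 ≤ j) :
    j ∉ Finset.Icc 1 (j - 1) ∪ J.image (· + j) := by
  simp only [Finset.mem_union, Finset.mem_Icc, Finset.mem_image]
  rintro (h | ⟨x, hx, hxe⟩)
  · omega
  · have := hJ x hx; omega

lemma runPos_shift {J : Finset ℕ} (hJ : ∀ x ∈ J, 1 ≤ x) {j : ℕ} (hj : 1 ≤ j)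
    {i : ℕ} (hi : i ∈ J) :
    runPos (Finset.Icc 1 (j - 1) ∪ J.image (· + j)) (i + j) = runPos J i := by
  set I := Finset.Icc 1 (j - 1) ∪ J.image (· + j) with hI
  have hi1 : 1 ≤ i := hJ i hi
  rw [runPos, runPos]
  have hset : (Finset.Icc 1 (i + j)).filter (fun a => Finset.Icc a (i + j) ⊆ I)
      = ((Finset.Icc 1 i).filter (fun a => Finset.Icc a i ⊆ J)).image (· + j) := by
    ext a
    simp only [Finset.mem_image, Finset.mem_filter, Finset.mem_Icc]
    constructor
    · rintro ⟨⟨ha1, ha2⟩, hsub⟩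
      have haj : j < a := by
        by_contra h
        exact notMem_shift hJ hj (hsub (Finset.mem_Icc.2 ⟨by omega, by omega⟩))
      refine ⟨a - j, ⟨⟨by omega, by omega⟩, ?_⟩, by omega⟩
      intro b hb
      rw [Finset.mem_Icc] at hb
      have hbI : b + j ∈ I := hsub (Finset.mem_Icc.2 ⟨by omega, by omega⟩)
      exact (mem_shift hJ hj b (by omega)).1 hbI
    · rintro ⟨a', ⟨⟨h1, h2⟩, hsub⟩, rfl⟩
      refine ⟨⟨by omega, by omega⟩, ?_⟩
      intro c hc
      rw [Finset.mem_Icc] at hc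
      have hcJ : c - j ∈ J := hsub (Finset.mem_Icc.2 ⟨by omega, by omega⟩)
      have : (c - j) + j ∈ I := (mem_shift hJ hj _ (by omega)).2 hcJ
      rwa [show c - j + j = c by omega] at this
  rw [hset, Finset.card_image_of_injective _ (add_left_injective j)]

lemma nI_decomp {J : Finset ℕ} (hJ : ∀ x ∈ J, 1 ≤ x) {j : ℕ} (hj : 1 ≤ j) :
    nI (Finset.Icc 1 (j - 1) ∪ J.image (· + j)) = j.factorial * nI J := by
  have hdisj : Disjoint (Finset.Icc 1 (j - 1)) (J.image (· + j)) := by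
    rw [Finset.disjoint_left]
    intro a ha hb
    rw [Finset.mem_Icc] at ha
    simp only [Finset.mem_image] at hb
    obtain ⟨x, hx, rfl⟩ := hb
    have := hJ x hx
    omega
  rw [nI, Finset.prod_union hdisj]
  congr 1
  · have : ∀ i ∈ Finset.Icc 1 (j - 1),
        runPos (Finset.Icc 1 (j - 1) ∪ J.image (· + j)) i + 1 = i + 1 := by
      intro i hi
      rw [Finset.mem_Icc] at hi
      rw [runPos_low Finset.subset_union_left hi.1 hi.2]
    rw [Finset.prod_congr rfl this, prod_Icc_add_one]
    congr 1
    omega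
  · rw [Finset.prod_image (fun x _ y _ h => by omega), nI]
    exact Finset.prod_congr rfl fun i hi => by rw [runPos_shift hJ hj hi]

/-- There is a positive integer not in `I`. -/
lemma firstGap_exists (I : Finset ℕ) : ∃ m, 0 < m ∧ m ∉ I :=
  ⟨I.sup id + 1, Nat.succ_pos _, fun h => by
    have := Finset.le_sup (f := id) h
    simp only [id] at this
    omega⟩

/-- The first positive integer not in `I`. -/
def firstGap (I : Finset ℕ) : ℕ := Nat.find (firstGap_exists I)

lemma firstGap_spec (I : Finset ℕ) : (0 < firstGap I ∧ firstGap I ∉ I) ∧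
    ∀ m, 0 < m → m < firstGap I → m ∈ I := by
  constructor
  · exact Nat.find_spec (firstGap_exists I)
  · intro m hm hlt
    have := Nat.find_min (firstGap_exists I) (m := m) hlt
    push_neg at this
    exact this hm

lemma firstGap_eq_iff (I : Finset ℕ) (j : ℕ) :
    firstGap I = j ↔ (0 < j ∧ j ∉ I) ∧ ∀ m, 0 < m → m < j → m ∈ I := by
  constructor
  · rintro rfl; exact firstGap_spec I
  · rintro ⟨⟨hj0, hjI⟩, hall⟩
    obtain ⟨⟨h0, hI⟩, hmin⟩ := firstGap_spec I
    by_contra h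
    rcases Nat.lt_or_ge (firstGap I) j with hlt | hge
    · exact hI (hall _ h0 hlt)
    · exact hjI (hmin j hj0 (by omega))

lemma T_rec (n : ℕ) (hn : 1 ≤ n) :
    ∑ I ∈ (Finset.Icc 1 (n - 1)).powerset, ((n.factorial : ℚ) / (nI I : ℚ))
      = ∑ j ∈ Finset.Icc 1 n, (n.choose j : ℚ) *
          ∑ J ∈ (Finset.Icc 1 (n - j - 1)).powerset, (((n - j).factorial : ℚ) / (nI J : ℚ)) := by
  classical
  rw [← Finset.sum_fiberwise_of_maps_to (g := firstGap) (t := Finset.Icc 1 n) ?hmaps]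
  case hmaps =>
    intro I hI
    rw [Finset.mem_powerset] at hI
    obtain ⟨⟨h0, hnotmem⟩, hmin⟩ := firstGap_spec I
    rw [Finset.mem_Icc]
    refine ⟨h0, ?_⟩
    by_contra h
    have : n ∈ I := hmin n (by omega) (by omega)
    have := hI this
    rw [Finset.mem_Icc] at this
    omega
  refine Finset.sum_congr rfl fun j hj => ?_
  rw [Finset.mem_Icc] at hj
  rw [Finset.mul_sum]
  refine Finset.sum_nbij' (i := fun I => (I.filter (j < ·)).image (· - j))
    (j := fun J => Finset.Icc 1 (j - 1) ∪ J.image (· + j)) ?_ ?_ ?_ ?_ ?_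
  · -- maps into powerset
    intro I hI
    simp only [Finset.mem_filter, Finset.mem_powerset] at hI ⊢
    intro x hx
    simp only [Finset.mem_image, Finset.mem_filter] at hx
    obtain ⟨i, ⟨hiI, hji⟩, rfl⟩ := hx
    have := hI.1 hiI
    rw [Finset.mem_Icc] at this ⊢
    omega
  · -- maps into fiber
    intro J hJ
    rw [Finset.mem_powerset] at hJ
    have hJ1 : ∀ x ∈ J, 1 ≤ x := fun x hx => (Finset.mem_Icc.1 (hJ hx)).1
    simp only [Finset.mem_filter, Finset.mem_powerset]
    constructor
    · intro x hx
      simp only [Finset.mem_union, Finset.mem_Icc, Finset.mem_image] at hx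
      rw [Finset.mem_Icc]
      rcases hx with h | ⟨y, hy, rfl⟩
      · omega
      · have := Finset.mem_Icc.1 (hJ hy)
        omega
    · rw [firstGap_eq_iff]
      refine ⟨⟨by omega, notMem_shift hJ1 hj.1⟩, fun m hm hlt => ?_⟩
      simp only [Finset.mem_union, Finset.mem_Icc]
      left; omega
  · -- left inverse : starting from I in the fiber
    intro I hI
    simp only [Finset.mem_filter, Finset.mem_powerset] at hI
    obtain ⟨hIsub, hfg⟩ := hI
    rw [firstGap_eq_iff] at hfg
    obtain ⟨⟨hj0, hjI⟩, hmin⟩ := hfg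
    ext x
    simp only [Finset.mem_union, Finset.mem_Icc, Finset.mem_image, Finset.mem_filter]
    constructor
    · rintro (h | ⟨y, ⟨i, ⟨hiI, hji⟩, rfl⟩, rfl⟩)
      · exact hmin x h.1 (by omega)
      · rwa [show i - j + j = i by omega]
    · intro hx
      have hx1 : 1 ≤ x := (Finset.mem_Icc.1 (hIsub hx)).1
      rcases Nat.lt_trichotomy x j with h | h | h
      · left; omega
      · exact absurd (h ▸ hx) hjI
      · right; exact ⟨x - j, ⟨x, ⟨hx, h⟩, rfl⟩, by omega⟩
  · -- right inverse : starting from J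
    intro J hJ
    rw [Finset.mem_powerset] at hJ
    have hJ1 : ∀ x ∈ J, 1 ≤ x := fun x hx => (Finset.mem_Icc.1 (hJ hx)).1
    ext x
    simp only [Finset.mem_image, Finset.mem_filter, Finset.mem_union, Finset.mem_Icc]
    constructor
    · rintro ⟨i, ⟨h | ⟨y, hy, rfl⟩, hji⟩, rfl⟩
      · omega
      · rwa [show y + j - j = y by omega]
    · intro hx
      have := hJ1 x hx
      exact ⟨x + j, ⟨Or.inr ⟨x, hx, rfl⟩, by omega⟩, by omega⟩
  · -- values agree
    intro I hI
    simp only [Finset.mem_filter, Finset.mem_powerset] at hI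
    obtain ⟨hIsub, hfg⟩ := hI
    rw [firstGap_eq_iff] at hfg
    obtain ⟨⟨hj0, hjI⟩, hmin⟩ := hfg
    set J := (I.filter (j < ·)).image (· - j) with hJdef
    have hJ1 : ∀ x ∈ J, 1 ≤ x := by
      intro x hx
      simp only [hJdef, Finset.mem_image, Finset.mem_filter] at hx
      obtain ⟨i, ⟨hiI, hji⟩, rfl⟩ := hx
      omega
    have hIdecomp : I = Finset.Icc 1 (j - 1) ∪ J.image (· + j) := by
      ext x
      simp only [hJdef, Finset.mem_union, Finset.mem_Icc, Finset.mem_image, Finset.mem_filter]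
      constructor
      · intro hx
        have hx1 : 1 ≤ x := (Finset.mem_Icc.1 (hIsub hx)).1
        rcases Nat.lt_trichotomy x j with h | h | h
        · left; omega
        · exact absurd (h ▸ hx) hjI
        · right; exact ⟨x - j, ⟨x, ⟨hx, h⟩, rfl⟩, by omega⟩
      · rintro (h | ⟨y, ⟨i, ⟨hiI, hji⟩, rfl⟩, rfl⟩)
        · exact hmin x h.1 (by omega)
        · rwa [show i - j + j = i by omega]
    have hnI : nI I = j.factorial * nI J := by
      rw [hIdecomp]
      exact nI_decomp hJ1 hj.1
    rw [hnI]
    have hfac : (n.choose j : ℚ) * j.factorial * (n - j).factorial = n.factorial := by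
      rw [show ((n.factorial : ℕ) : ℚ) = ((n.choose j * j.factorial * (n - j).factorial : ℕ) : ℚ)
        from by rw [Nat.choose_mul_factorial_mul_factorial hj.2]]
      push_cast
      ring
    have hnIJ : (nI J : ℚ) ≠ 0 := Nat.cast_ne_zero.2 (nI_pos J).ne'
    have hjfac : (j.factorial : ℚ) ≠ 0 := Nat.cast_ne_zero.2 j.factorial_pos.ne'
    rw [← hfac]
    push_cast
    field_simp

lemma T_eq_orderedBell : ∀ n : ℕ,
    ∑ I ∈ (Finset.Icc 1 (n - 1)).powerset, ((n.factorial : ℚ) / (nI I : ℚ))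
      = (orderedBell n : ℚ) := by
  intro n
  induction n using Nat.strong_induction_on with
  | _ n ih =>
    match n with
    | 0 =>
      rw [orderedBell_zero,
        show Finset.Icc 1 (0 - 1) = (∅ : Finset ℕ) from Finset.Icc_eq_empty (by omega)]
      simp [nI]
    | (m + 1) =>
      rw [T_rec (m + 1) (by omega), orderedBell_rec (m + 1) (by omega)]
      push_cast
      refine Finset.sum_congr rfl fun j hj => ?_
      rw [Finset.mem_Icc] at hj
      rw [ih (m + 1 - j) (by omega)]

/-- `∑_{I ⊆ {1,…,n-1}} (n!)²/n_I = n! · bₙ`, where `bₙ` is the ordered Bell number. -/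
theorem sum_sq_factorial_div_nI (n : ℕ) (hn : 1 ≤ n) :
    ∑ I ∈ (Finset.Icc 1 (n - 1)).powerset, ((n.factorial : ℚ) ^ 2 / (nI I : ℚ)) =
      (n.factorial : ℚ) * (orderedBell n : ℚ) := by
  have : ∀ I ∈ (Finset.Icc 1 (n - 1)).powerset,
      ((n.factorial : ℚ) ^ 2 / (nI I : ℚ)) = (n.factorial : ℚ) * ((n.factorial : ℚ) / (nI I : ℚ)) := by
    intro I _
    rw [pow_two, mul_div_assoc]
  rw [Finset.sum_congr rfl this, ← Finset.mul_sum, T_eq_orderedBell]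
end

section
/- For all n ≥ 3, defining b(n) = Σ_{compositions (i_1,...,i_k) of n} multinomial(n; i_1,...,i_k)·I(i_1)⋯I(i_k), one has the strict inequalities F_n · n! < b(n) < 2^{n-1} · n!, where F_n is the n-th Fibonacci number and I(m) is the number of involutions in S_m. -/
/-!
Since `multinomial(n; i₁,…,i_k) · i₁!⋯i_k! = n!` and `I(m) ≤ m!`, every summand of `b(n)` is at
most `n!`; it equals `n!` when all parts are at most `2` (as `I(1) = 1!` and `I(2) = 2!`) and is
smaller as soon as some part is at least `3` (an `m`-cycle with `m ≥ 3` is not an involution).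
There are `2^(n-1)` compositions of `n`, among them `(n)` with a strictly smaller summand, and
`F_{n+1} > F_n` compositions into parts `1` and `2`.
-/

/-- The number of involutions in the symmetric group `S_n`. -/
def invCount (n : ℕ) : ℕ :=
  Fintype.card {σ : Equiv.Perm (Fin n) // σ * σ = 1}

/-- `b(n) = ∑_{(i₁,…,i_k) ⊨ n} multinomial(n; i₁,…,i_k) · I(i₁)⋯I(i_k)`, the sum over all
compositions of `n` into positive parts. -/
def borelCount (n : ℕ) : ℕ :=
  ∑ c : Composition n,
    Nat.multinomial Finset.univ c.blocksFun * ∏ i, invCount (c.blocksFun i)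

open Finset Nat

theorem invCount_pos (n : ℕ) : 0 < invCount n :=
  Fintype.card_pos_iff.2 ⟨⟨1, mul_one 1⟩⟩

theorem invCount_le_factorial (n : ℕ) : invCount n ≤ n ! := by
  simpa [invCount, Fintype.card_perm] using
    Fintype.card_subtype_le fun σ : Equiv.Perm (Fin n) => σ * σ = 1

theorem finRotate_mul_self_ne_one {n : ℕ} (hn : 3 ≤ n) : finRotate n * finRotate n ≠ 1 := by
  obtain ⟨m, rfl⟩ := Nat.exists_eq_add_of_le' hn
  intro h
  have := congrArg Fin.val (DFunLike.congr_fun h 0)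
  simp [Fin.val_add, Nat.mod_eq_of_lt (by omega : 2 < m + 3)] at this

theorem invCount_lt_factorial {n : ℕ} (hn : 3 ≤ n) : invCount n < n ! := by
  simpa [invCount, Fintype.card_perm] using
    Fintype.card_subtype_lt (p := fun σ : Equiv.Perm (Fin n) => σ * σ = 1)
      (finRotate_mul_self_ne_one hn)

theorem invCount_eq_factorial_of_le_two {n : ℕ} (hn : n ≤ 2) : invCount n = n ! := by
  interval_cases n <;> decide

theorem Composition.multinomial_mul_prod_factorial {n : ℕ} (c : Composition n) :
    Nat.multinomial univ c.blocksFun * ∏ i, (c.blocksFun i)! = n ! := by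
  rw [mul_comm, Nat.multinomial_spec, c.sum_blocksFun]

def borelWeight {n : ℕ} (c : Composition n) : ℕ :=
  Nat.multinomial univ c.blocksFun * ∏ i, invCount (c.blocksFun i)

section borelWeight

variable {n : ℕ} (c : Composition n)

theorem borelWeight_le_factorial : borelWeight c ≤ n ! := by
  rw [← c.multinomial_mul_prod_factorial]
  exact Nat.mul_le_mul_left _ (prod_le_prod' fun i _ => invCount_le_factorial _)

theorem borelWeight_lt_factorial {i : Fin c.length} (hi : 3 ≤ c.blocksFun i) :
    borelWeight c < n ! := by
  rw [← c.multinomial_mul_prod_factorial]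
  refine Nat.mul_lt_mul_of_pos_left ?_ (Nat.multinomial_pos _ _)
  exact prod_lt_prod (fun _ _ => invCount_pos _) (fun _ _ => invCount_le_factorial _)
    ⟨i, mem_univ _, invCount_lt_factorial hi⟩

theorem borelWeight_eq_factorial_of_forall_le_two (hc : ∀ x ∈ c.blocks, x ≤ 2) :
    borelWeight c = n ! := by
  rw [← c.multinomial_mul_prod_factorial, borelWeight]
  congr 1
  exact prod_congr rfl fun i _ =>
    invCount_eq_factorial_of_le_two (hc _ (c.blocksFun_mem_blocks i))

end borelWeight

def onesTwosLists : ℕ → Finset (List ℕ)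
  | 0 => {[]}
  | 1 => {[1]}
  | n + 2 => (onesTwosLists (n + 1)).image (List.cons 1) ∪ (onesTwosLists n).image (List.cons 2)

theorem card_onesTwosLists : ∀ n, #(onesTwosLists n) = fib (n + 1)
  | 0 => rfl
  | 1 => rfl
  | n + 2 => by
    have hdisj : Disjoint ((onesTwosLists (n + 1)).image (List.cons 1))
        ((onesTwosLists n).image (List.cons 2)) := by
      simp only [disjoint_left, mem_image]
      rintro _ ⟨l, -, rfl⟩ ⟨l', -, h⟩
      exact absurd (List.head_eq_of_cons_eq h) (by norm_num)
    rw [onesTwosLists, card_union_of_disjoint hdisj,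
      Finset.card_image_of_injective _ List.cons_injective,
      Finset.card_image_of_injective _ List.cons_injective,
      card_onesTwosLists (n + 1), card_onesTwosLists n, add_comm]
    exact fib_add_two.symm

theorem sum_eq_and_forall_mem_of_mem_onesTwosLists :
    ∀ {n : ℕ} {l : List ℕ}, l ∈ onesTwosLists n → l.sum = n ∧ ∀ x ∈ l, x = 1 ∨ x = 2
  | 0, l, hl => by simp_all [onesTwosLists]
  | 1, l, hl => by simp_all [onesTwosLists]
  | n + 2, l, hl => by
    simp only [onesTwosLists, mem_union, mem_image] at hl
    rcases hl with ⟨l, hl, rfl⟩ | ⟨l, hl, rfl⟩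
    all_goals
      obtain ⟨hsum, hmem⟩ := sum_eq_and_forall_mem_of_mem_onesTwosLists hl
      refine ⟨by simp [hsum]; omega, by simpa using hmem⟩

theorem fib_succ_le_card_filter_forall_le_two (n : ℕ) :
    fib (n + 1) ≤ #{c : Composition n | ∀ x ∈ c.blocks, x ≤ 2} := by
  rw [← card_onesTwosLists]
  refine (card_le_card fun l hl => ?_).trans (card_image_le (f := Composition.blocks))
  obtain ⟨hsum, hmem⟩ := sum_eq_and_forall_mem_of_mem_onesTwosLists hl
  simp only [mem_image, mem_filter, mem_univ, true_and]
  exact ⟨⟨l, fun hx => by rcases hmem _ hx with h | h <;> omega, hsum⟩,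
    fun x hx => by rcases hmem x hx with h | h <;> omega, rfl⟩

theorem fib_succ_mul_factorial_le_borelCount (n : ℕ) : fib (n + 1) * n ! ≤ borelCount n := by
  let S : Finset (Composition n) := {c | ∀ x ∈ c.blocks, x ≤ 2}
  calc fib (n + 1) * n ! ≤ #S * n ! := by gcongr; exact fib_succ_le_card_filter_forall_le_two n
    _ = ∑ c ∈ S, borelWeight c := by
      rw [sum_congr rfl fun c hc => borelWeight_eq_factorial_of_forall_le_two c (mem_filter.1 hc).2,
        sum_const, smul_eq_mul]
    _ ≤ borelCount n := sum_le_sum_of_subset (subset_univ S)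

theorem borelCount_lt_two_pow_mul_factorial {n : ℕ} (hn : 3 ≤ n) :
    borelCount n < 2 ^ (n - 1) * n ! := by
  have hn0 : 0 < n := by omega
  calc borelCount n = ∑ c : Composition n, borelWeight c := rfl
    _ < ∑ _c : Composition n, n ! :=
      sum_lt_sum (fun c _ => borelWeight_le_factorial c) ⟨Composition.single n hn0, mem_univ _,
        borelWeight_lt_factorial _ (i := ⟨0, by simp⟩) (by simpa [Composition.single_blocksFun])⟩
    _ = 2 ^ (n - 1) * n ! := by simp [composition_card]

/-- For all `n ≥ 3`, `Fₙ · n! < b(n) < 2^(n-1) · n!`, where `Fₙ` is the `n`-th Fibonacci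
number (with `F₁ = F₂ = 1`). -/
theorem fib_mul_factorial_lt_borelCount_lt (n : ℕ) (hn : 3 ≤ n) :
    Nat.fib n * n.factorial < borelCount n ∧
      borelCount n < 2 ^ (n - 1) * n.factorial :=
  ⟨(Nat.mul_lt_mul_of_pos_right (fib_lt_fib_succ (by omega)) (factorial_pos n)).trans_le
      (fib_succ_mul_factorial_le_borelCount n),
    borelCount_lt_two_pow_mul_factorial hn⟩
end
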